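/- arXiv:math/0612488 — 3 statements merged into one kernel-verified Lean document; each statement's English description precedes it below -/
import Mathlib

section
/- For all 0 ≤ p ≤ q ≤ 1, the probability of ever hitting the lower boundary is antitone in the success probability: P_p(τ < ∞, S_τ ≤ L_τ) ≥ P_q(τ < ∞, S_τ ≤ L_τ). -/
open MeasureTheory ProbabilityTheory Filter Asymptotics
open scoped ENNReal

namespace SeqMC

variable {Ω : Type*} [MeasurableSpace Ω]

/-- Partial sums: `S n = X_1 + ⋯ + X_n`, where the i-th variable `X_i` is `X (i-1)`. -/
def S (X : ℕ → Ω → ℕ) (n : ℕ) (ω : Ω) : ℕ := ∑ i ∈ Finset.range n, X i ω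

/-- `X` is an i.i.d. Bernoulli(p) sequence under the probability measure `P`. -/
structure IsBernoulliSeq (P : Measure Ω) (p : ℝ) (X : ℕ → Ω → ℕ) : Prop where
  isProb : IsProbabilityMeasure P
  meas : ∀ i, Measurable (X i)
  bdd : ∀ i ω, X i ω ≤ 1
  indep : iIndepFun X P
  bern : ∀ i, P (X i ⁻¹' {1}) = ENNReal.ofReal p

/-- The walk stayed strictly between the boundaries at all steps `1 ≤ k ≤ n`, i.e. `τ > n`. -/
def notStopped (X : ℕ → Ω → ℕ) (U L : ℕ → ℤ) (n : ℕ) (ω : Ω) : Prop :=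
  ∀ k, 1 ≤ k → k ≤ n → L k < (S X k ω : ℤ) ∧ (S X k ω : ℤ) < U k

/-- The event `τ ≤ n` and `S_τ ≥ U_τ`. -/
def hitUpperBy (X : ℕ → Ω → ℕ) (U L : ℕ → ℤ) (n : ℕ) (ω : Ω) : Prop :=
  ∃ k, 1 ≤ k ∧ k ≤ n ∧ notStopped X U L (k - 1) ω ∧ U k ≤ (S X k ω : ℤ)

/-- The event `τ ≤ n` and `S_τ ≤ L_τ`. -/
def hitLowerBy (X : ℕ → Ω → ℕ) (U L : ℕ → ℤ) (n : ℕ) (ω : Ω) : Prop :=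
  ∃ k, 1 ≤ k ∧ k ≤ n ∧ notStopped X U L (k - 1) ω ∧ (S X k ω : ℤ) ≤ L k

/-- The recursively defined boundaries `(U_n, L_n)`: `U_1 = 2`, `L_1 = -1` and for `n ≥ 2`,
`U_n` is the least `j ∈ {1,2,…}` with `P_α(τ ≥ n, S_n ≥ j) + P_α(τ < n, S_τ ≥ U_τ) ≤ ε_n`,
`L_n` is the greatest `j ∈ ℤ` with `P_α(τ ≥ n, S_n ≤ j) + P_α(τ < n, S_τ ≤ L_τ) ≤ ε_n`.
Here `Pα` is the measure `P_α` and `εs` the spending sequence. -/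
noncomputable def bnd (Pα : Measure Ω) (X : ℕ → Ω → ℕ) (εs : ℕ → ℝ) : ℕ → ℤ × ℤ
  | 0 => (2, -1)
  | 1 => (2, -1)
  | n + 2 =>
      let U : ℕ → ℤ := fun k => if h : k < n + 2 then (bnd Pα X εs k).1 else 0
      let L : ℕ → ℤ := fun k => if h : k < n + 2 then (bnd Pα X εs k).2 else 0
      (sInf {j : ℤ | 1 ≤ j ∧
          Pα {ω | notStopped X U L (n + 1) ω ∧ j ≤ (S X (n + 2) ω : ℤ)} +
            Pα {ω | hitUpperBy X U L (n + 1) ω} ≤ ENNReal.ofReal (εs (n + 2))},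
       sSup {j : ℤ |
          Pα {ω | notStopped X U L (n + 1) ω ∧ (S X (n + 2) ω : ℤ) ≤ j} +
            Pα {ω | hitLowerBy X U L (n + 1) ω} ≤ ENNReal.ofReal (εs (n + 2))})
  termination_by n => n
  decreasing_by all_goals omega

/-- The upper boundary `U_n`. -/
noncomputable def Ub (Pα : Measure Ω) (X : ℕ → Ω → ℕ) (εs : ℕ → ℝ) (n : ℕ) : ℤ :=
  (bnd Pα X εs n).1

/-- The lower boundary `L_n`. -/
noncomputable def Lb (Pα : Measure Ω) (X : ℕ → Ω → ℕ) (εs : ℕ → ℝ) (n : ℕ) : ℤ :=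
  (bnd Pα X εs n).2

/-- The stopping time `τ = inf {k ≥ 1 : S_k ≥ U_k or S_k ≤ L_k}`, with `0` encoding `τ = ∞`. -/
noncomputable def tau (Pα : Measure Ω) (X : ℕ → Ω → ℕ) (εs : ℕ → ℝ) (ω : Ω) : ℕ :=
  sInf {k | 1 ≤ k ∧ ((S X k ω : ℤ) ≤ Lb Pα X εs k ∨ Ub Pα X εs k ≤ (S X k ω : ℤ))}

/-- `τ` as an extended nonneg real (`∞` when the algorithm never stops). -/
noncomputable def tauE (Pα : Measure Ω) (X : ℕ → Ω → ℕ) (εs : ℕ → ℝ) (ω : Ω) : ℝ≥0∞ :=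
  if tau Pα X εs ω = 0 then ⊤ else (tau Pα X εs ω : ℝ≥0∞)

/-- The event `τ < ∞` and `S_τ ≥ U_τ`. -/
def hitsUpper (Pα : Measure Ω) (X : ℕ → Ω → ℕ) (εs : ℕ → ℝ) (ω : Ω) : Prop :=
  tau Pα X εs ω ≠ 0 ∧ Ub Pα X εs (tau Pα X εs ω) ≤ (S X (tau Pα X εs ω) ω : ℤ)

/-- The event `τ < ∞` and `S_τ ≤ L_τ`. -/
def hitsLower (Pα : Measure Ω) (X : ℕ → Ω → ℕ) (εs : ℕ → ℝ) (ω : Ω) : Prop :=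
  tau Pα X εs ω ≠ 0 ∧ (S X (tau Pα X εs ω) ω : ℤ) ≤ Lb Pα X εs (tau Pα X εs ω)

/-- The estimator `p̂ = S_τ/τ` (`= α` if `τ = ∞`). -/
noncomputable def phat (Pα : Measure Ω) (X : ℕ → Ω → ℕ) (εs : ℕ → ℝ) (α : ℝ) (ω : Ω) : ℝ :=
  if tau Pα X εs ω = 0 then α
  else (S X (tau Pα X εs ω) ω : ℝ) / (tau Pα X εs ω)

/-! Hitting the lower boundary by time `n` is a down-closed event in `(X_1, …, X_n)`: lowering
some `X_i` lowers every partial sum, so the walk reaches the lower boundary no later and stays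
below the upper one until then. Realising `X_i` under every `P_p` at once as `1{V_i ≤ p}` with
independent uniform `V_i` makes the Bernoulli vector pointwise nondecreasing in `p`, so the
probability of a down-closed event is nonincreasing in `p`; letting `n → ∞` gives the claim. -/

section Boundaries

variable {α β : Type*} {X : ℕ → α → ℕ} {Y : ℕ → β → ℕ} {U L : ℕ → ℤ}

lemma S_le_S_of_le {k : ℕ} {ω : α} {ω' : β} (h : ∀ i < k, Y i ω' ≤ X i ω) :
    S Y k ω' ≤ S X k ω :=
  Finset.sum_le_sum fun i hi => h i (Finset.mem_range.mp hi)

lemma hitLowerBy_of_le {n : ℕ} {ω : α} {ω' : β} (h : ∀ i < n, Y i ω' ≤ X i ω)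
    (hX : hitLowerBy X U L n ω) : hitLowerBy Y U L n ω' := by
  obtain ⟨k, hk1, hkn, hXns, hXk⟩ := hX
  have hS : ∀ j ≤ k, (S Y j ω' : ℤ) ≤ S X j ω := fun j hj =>
    Nat.cast_le.mpr (S_le_S_of_le fun i hi => h i (by omega))
  have hex : ∃ m, 1 ≤ m ∧ (S Y m ω' : ℤ) ≤ L m ∧ m ≤ k :=
    ⟨k, hk1, (hS k le_rfl).trans hXk, le_rfl⟩
  obtain ⟨hm1, hmL, hmk⟩ := Nat.find_spec hex
  refine ⟨Nat.find hex, hm1, hmk.trans hkn, fun j hj1 hjm => ⟨?_, ?_⟩, hmL⟩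
  · by_contra hjL
    exact Nat.find_min hex (m := j) (by omega) ⟨hj1, not_lt.mp hjL, by omega⟩
  · exact (hS j (by omega)).trans_lt (hXns j hj1 (by omega)).2

lemma hitLowerBy_mono : Monotone fun n => {ω | hitLowerBy X U L n ω} :=
  fun _ _ hab _ ⟨k, hk1, hkn, hns, hkL⟩ => ⟨k, hk1, hkn.trans hab, hns, hkL⟩

end Boundaries

lemma extend_val_apply_of_lt {γ : Type*} {n : ℕ} (x : Fin n → γ) (d : ℕ → γ) {i : ℕ}
    (hi : i < n) : Function.extend Fin.val x d i = x ⟨i, hi⟩ :=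
  Fin.val_injective.extend_apply x d ⟨i, hi⟩

/-- The event `hitLowerBy U L n` on words of length `n`; the zero padding beyond `n` is never
read. -/
def lowerHitSet (U L : ℕ → ℤ) (n : ℕ) : Set (Fin n → ℕ) :=
  {x | hitLowerBy (fun i (x : Fin n → ℕ) => Function.extend Fin.val x 0 i) U L n x}

lemma isLowerSet_lowerHitSet (U L : ℕ → ℤ) (n : ℕ) : IsLowerSet (lowerHitSet U L n) :=
  fun x y hyx hx => hitLowerBy_of_le (fun i hi => by
    simpa only [extend_val_apply_of_lt _ _ hi] using hyx ⟨i, hi⟩) hx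

lemma setOf_hitLowerBy_eq_preimage {α : Type*} (X : ℕ → α → ℕ) (U L : ℕ → ℤ) (n : ℕ) :
    {ω | hitLowerBy X U L n ω} = (fun ω (i : Fin n) => X i ω) ⁻¹' lowerHitSet U L n := by
  ext ω
  exact ⟨hitLowerBy_of_le fun i hi => (extend_val_apply_of_lt _ _ hi).le,
    hitLowerBy_of_le fun i hi => (extend_val_apply_of_lt (fun i : Fin n => X i ω) 0 hi).ge⟩

lemma hitsLower_iff_exists_hitLowerBy (Pα : Measure Ω) (X : ℕ → Ω → ℕ) (εs : ℕ → ℝ) (ω : Ω) :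
    hitsLower Pα X εs ω ↔ ∃ n, hitLowerBy X (Ub Pα X εs) (Lb Pα X εs) n ω := by
  set T := {k | 1 ≤ k ∧ ((S X k ω : ℤ) ≤ Lb Pα X εs k ∨ Ub Pα X εs k ≤ (S X k ω : ℤ))}
  have htau : tau Pα X εs ω = sInf T := rfl
  constructor
  · rintro ⟨hne, hle⟩
    have hT : T.Nonempty :=
      Set.nonempty_iff_ne_empty.mpr fun hT => hne (by rw [htau, hT, Nat.sInf_empty])
    have hmem : tau Pα X εs ω ∈ T := Nat.sInf_mem hT
    refine ⟨_, _, hmem.1, le_rfl, fun j hj1 hj => ?_, hle⟩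
    have hjT : j ∉ T := Nat.notMem_of_lt_sInf (by omega)
    exact ⟨not_le.mp fun h => hjT ⟨hj1, .inl h⟩, not_le.mp fun h => hjT ⟨hj1, .inr h⟩⟩
  · rintro ⟨n, k, hk1, -, hns, hkL⟩
    have hleast : IsLeast T k := ⟨⟨hk1, Or.inl hkL⟩, fun m ⟨hm1, hm⟩ => by
      by_contra! hmk
      have := hns m hm1 (by omega)
      omega⟩
    rw [hitsLower, htau, hleast.csInf_eq]
    exact ⟨by omega, hkL⟩

open scoped unitInterval

/-- Realises Bernoulli(`p`) on the uniform space `I`, monotonically in `p`. -/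
noncomputable def coin (p : ℝ) (u : I) : ℕ := if (u : ℝ) ≤ p then 1 else 0

lemma measurable_coin (p : ℝ) : Measurable (coin p) :=
  Measurable.ite (measurableSet_le measurable_subtype_coe measurable_const)
    measurable_const measurable_const

lemma coin_mono {p q : ℝ} (hpq : p ≤ q) (u : I) : coin p u ≤ coin q u := by
  unfold coin
  split_ifs <;> first | omega | linarith

lemma coin_le_one (p : ℝ) (u : I) : coin p u ≤ 1 := by
  unfold coin
  split_ifs <;> omega

lemma volume_coin_preimage_one {p : ℝ} (hp0 : 0 ≤ p) (hp1 : p ≤ 1) :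
    volume (coin p ⁻¹' {1}) = ENNReal.ofReal p := by
  have : coin p ⁻¹' {1} = Set.Iic ⟨p, hp0, hp1⟩ := by
    ext u
    simp [coin, ← Subtype.coe_le_coe]
  rw [this, unitInterval.volume_Iic]

lemma map_eq_map_of_le_one {α β : Type*} [MeasurableSpace α] [MeasurableSpace β]
    {μ : Measure α} {ν : Measure β} [IsProbabilityMeasure μ] [IsProbabilityMeasure ν]
    {f : α → ℕ} {g : β → ℕ} (hf : Measurable f) (hg : Measurable g)
    (hf1 : ∀ a, f a ≤ 1) (hg1 : ∀ b, g b ≤ 1) (h : μ (f ⁻¹' {1}) = ν (g ⁻¹' {1})) :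
    μ.map f = ν.map g := by
  refine Measure.ext_of_singleton fun k => ?_
  rw [Measure.map_apply hf (measurableSet_singleton k),
    Measure.map_apply hg (measurableSet_singleton k)]
  rcases k with _ | _ | k
  · have hf0 : f ⁻¹' {0} = (f ⁻¹' {1})ᶜ := by ext a; have := hf1 a; simp; omega
    have hg0 : g ⁻¹' {0} = (g ⁻¹' {1})ᶜ := by ext b; have := hg1 b; simp; omega
    rw [hf0, hg0, prob_compl_eq_one_sub (hf (measurableSet_singleton 1)),
      prob_compl_eq_one_sub (hg (measurableSet_singleton 1)), h]
  · exact h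
  · have hf2 : f ⁻¹' {k + 2} = ∅ := by ext a; have := hf1 a; simp; omega
    have hg2 : g ⁻¹' {k + 2} = ∅ := by ext b; have := hg1 b; simp; omega
    rw [hf2, hg2, measure_empty, measure_empty]

lemma IsBernoulliSeq.map_eq_map_coin {P : Measure Ω} {p : ℝ} {X : ℕ → Ω → ℕ}
    (hB : IsBernoulliSeq P p X) (hp0 : 0 ≤ p) (hp1 : p ≤ 1) (i : ℕ) :
    P.map (X i) = volume.map (coin p) := by
  have := hB.isProb
  exact map_eq_map_of_le_one (hB.meas i) (measurable_coin p) (hB.bdd i) (coin_le_one p)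
    (by rw [hB.bern i, volume_coin_preimage_one hp0 hp1])

lemma IsBernoulliSeq.map_fin_eq_map_coin {P : Measure Ω} {p : ℝ} {X : ℕ → Ω → ℕ}
    (hB : IsBernoulliSeq P p X) (hp0 : 0 ≤ p) (hp1 : p ≤ 1) (n : ℕ) :
    P.map (fun ω (i : Fin n) => X i ω)
      = (Measure.pi fun _ : Fin n => (volume : Measure I)).map fun u i => coin p (u i) := by
  rw [iIndepFun.map_fun_eq_pi_map (f := fun i : Fin n => X i)
      (fun i => (hB.meas i).aemeasurable) (hB.indep.precomp Fin.val_injective),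
    Measure.pi_map_pi fun _ => (measurable_coin p).aemeasurable]
  simp only [hB.map_eq_map_coin hp0 hp1]

lemma measure_preimage_isLowerSet_antitone {μ ν : Measure Ω} {X : ℕ → Ω → ℕ} {p q : ℝ}
    {n : ℕ} {A : Set (Fin n → ℕ)} (hA : IsLowerSet A) (hp : 0 ≤ p) (hpq : p ≤ q) (hq : q ≤ 1)
    (hBp : IsBernoulliSeq μ p X) (hBq : IsBernoulliSeq ν q X) :
    ν ((fun ω (i : Fin n) => X i ω) ⁻¹' A) ≤ μ ((fun ω (i : Fin n) => X i ω) ⁻¹' A) := by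
  have hAm : MeasurableSet A := A.to_countable.measurableSet
  have hV : Measurable fun ω (i : Fin n) => X i ω := measurable_pi_lambda _ fun i => hBp.meas i
  have hC : ∀ r, Measurable fun (u : Fin n → I) i => coin r (u i) := fun r =>
    measurable_pi_lambda _ fun i => (measurable_coin r).comp (measurable_pi_apply i)
  rw [← Measure.map_apply hV hAm, ← Measure.map_apply hV hAm,
    hBp.map_fin_eq_map_coin hp (hpq.trans hq), hBq.map_fin_eq_map_coin (hp.trans hpq) hq,
    Measure.map_apply (hC q) hAm, Measure.map_apply (hC p) hAm]
  exact measure_mono fun u hu => hA (fun i => coin_mono hpq (u i)) hu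

theorem statement_5_general {Ω : Type*} [MeasurableSpace Ω]
    (α : ℝ)
    (εs : ℕ → ℝ)
    (P : ℝ → Measure Ω) (X : ℕ → Ω → ℕ)
    (hBern : ∀ p ∈ Set.Icc (0:ℝ) 1, IsBernoulliSeq (P p) p X)
    (p q : ℝ) (hp : 0 ≤ p) (hpq : p ≤ q) (hq : q ≤ 1) :
    P q {ω | hitsLower (P α) X εs ω} ≤ P p {ω | hitsLower (P α) X εs ω} := by
  have hUnion : {ω | hitsLower (P α) X εs ω}
      = ⋃ n, {ω | hitLowerBy X (Ub (P α) X εs) (Lb (P α) X εs) n ω} := by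
    ext ω
    simpa only [Set.mem_ofPred_eq, Set.mem_iUnion] using hitsLower_iff_exists_hitLowerBy _ X εs ω
  rw [hUnion, hitLowerBy_mono.measure_iUnion, hitLowerBy_mono.measure_iUnion]
  refine iSup_mono fun n => ?_
  simp only [setOf_hitLowerBy_eq_preimage]
  exact measure_preimage_isLowerSet_antitone (isLowerSet_lowerHitSet _ _ n) hp hpq hq
    (hBern p ⟨hp, hpq.trans hq⟩) (hBern q ⟨hp.trans hpq, hq⟩)

theorem statement_5 {Ω : Type*} [MeasurableSpace Ω]
    (α ε : ℝ) (hα : α ∈ Set.Ioo (0:ℝ) 1) (hε : ε ∈ Set.Ioo (0:ℝ) 1)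
    (εs : ℕ → ℝ) (hεs0 : εs 0 = 0) (hmono : Monotone εs)
    (hnonneg : ∀ n, 0 ≤ εs n) (hlt : ∀ n, εs n < ε)
    (hlim : Filter.Tendsto εs Filter.atTop (nhds ε))
    (P : ℝ → Measure Ω) (X : ℕ → Ω → ℕ)
    (hBern : ∀ p ∈ Set.Icc (0:ℝ) 1, IsBernoulliSeq (P p) p X)
    (p q : ℝ) (hp : 0 ≤ p) (hpq : p ≤ q) (hq : q ≤ 1) :
    P q {ω | hitsLower (P α) X εs ω} ≤ P p {ω | hitsLower (P α) X εs ω} :=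
  statement_5_general α εs P X hBern p q hp hpq hq

end SeqMC
end

section
/- For every n ∈ ℕ and all 0 ≤ p ≤ q ≤ 1, the probability of hitting the upper boundary within the first n steps is monotone in the success probability: P_p(τ ≤ n, S_τ ≥ U_τ) ≤ P_q(τ ≤ n, S_τ ≥ U_τ). (This follows from the coupling S_{p,k} = Σ_{i≤k} 1{V_i ≤ p} with V_1, V_2, … i.i.d. uniform on [0,1]: if the coupled path at level p hits the upper boundary by time n, then so does the coupled path at level q, at a time no later and without first hitting a lower boundary.) -/
open MeasureTheory ProbabilityTheory Filter Asymptotics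
open scoped ENNReal

namespace SeqMC

variable {Ω : Type*} [MeasurableSpace Ω]

/-!
Reaching the upper boundary by time `n` is an increasing property of the first `n` increments:
raising increments makes the walk reach `U` no later, and up to that time it stays above `L`
because the lower walk did. Hence `P_r(τ ≤ n, S_τ ≥ U_τ)` is the mass that the product of `n`
Bernoulli(r) laws gives to an up-set of the cube `Fin n → Bool`, and such masses are
nondecreasing in `r`: conditioning on the first coordinate writes the mass as
`(1 - r) A(r) + r B(r)` with `A ≤ B` both nondecreasing in `r`, by induction.
-/

section Walk

variable {Ω₁ Ω₂ : Type*} {X₁ : ℕ → Ω₁ → ℕ} {X₂ : ℕ → Ω₂ → ℕ} {U L : ℕ → ℤ} {n : ℕ}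
  {ω₁ : Ω₁} {ω₂ : Ω₂}

theorem hitUpperBy_mono (hX : ∀ i < n, X₁ i ω₁ ≤ X₂ i ω₂) :
    hitUpperBy X₁ U L n ω₁ → hitUpperBy X₂ U L n ω₂ := by
  rintro ⟨k, hk1, hkn, hbefore, hUk⟩
  have hS : ∀ m ≤ n, (S X₁ m ω₁ : ℤ) ≤ S X₂ m ω₂ := fun m hm => by
    exact_mod_cast Finset.sum_le_sum fun i hi => hX i ((Finset.mem_range.mp hi).trans_le hm)
  classical
  have hex : ∃ m, 1 ≤ m ∧ m ≤ k ∧ U m ≤ (S X₂ m ω₂ : ℤ) :=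
    ⟨k, hk1, le_rfl, hUk.trans (hS k hkn)⟩
  obtain ⟨hm1, hmk, hUm⟩ := Nat.find_spec hex
  refine ⟨Nat.find hex, hm1, hmk.trans hkn, fun j hj1 hj => ⟨?_, ?_⟩, hUm⟩
  · exact (hbefore j hj1 (by omega)).1.trans_le (hS j (by omega))
  · by_contra! hUj
    exact Nat.find_min hex (by omega) ⟨hj1, by omega, hUj⟩

theorem hitUpperBy_congr (hX : ∀ i < n, X₁ i ω₁ = X₂ i ω₂) :
    hitUpperBy X₁ U L n ω₁ ↔ hitUpperBy X₂ U L n ω₂ :=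
  ⟨hitUpperBy_mono fun i hi => (hX i hi).le, hitUpperBy_mono fun i hi => (hX i hi).ge⟩

/-- The coordinate walk on the cube, with increments `0` after time `n`. -/
def cubeWalk (n i : ℕ) (v : Fin n → Bool) : ℕ :=
  if h : i < n then (v ⟨i, h⟩).toNat else 0

def bits (X : ℕ → Ω₁ → ℕ) (n : ℕ) (ω : Ω₁) : Fin n → Bool :=
  fun i => decide (X i ω = 1)

theorem isUpperSet_hitUpperBy_cubeWalk :
    IsUpperSet {v : Fin n → Bool | hitUpperBy (cubeWalk n) U L n v} :=
  fun _ _ hvw => hitUpperBy_mono fun i hi => by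
    simpa [cubeWalk, hi] using Bool.toNat_le_toNat (hvw ⟨i, hi⟩)

theorem hitUpperBy_iff_cubeWalk_bits {X : ℕ → Ω₁ → ℕ} {ω : Ω₁} (hX : ∀ i, X i ω ≤ 1) :
    hitUpperBy X U L n ω ↔ hitUpperBy (cubeWalk n) U L n (bits X n ω) :=
  hitUpperBy_congr fun i hi => by
    rcases Nat.le_one_iff_eq_zero_or_eq_one.mp (hX i) with h | h <;> simp [cubeWalk, bits, hi, h]

end Walk

section BernoulliCube

variable {n : ℕ} {r p q : ℝ}

def bernoulliWeight (r : ℝ) (v : Fin n → Bool) : ℝ :=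
  ∏ i, if v i then r else 1 - r

theorem bernoulliWeight_nonneg (hr₀ : 0 ≤ r) (hr₁ : r ≤ 1) (v : Fin n → Bool) :
    0 ≤ bernoulliWeight r v :=
  Finset.prod_nonneg fun i _ => by split <;> linarith

theorem sum_bernoulliWeight_mul_eq_cons (r : ℝ) (F : (Fin (n + 1) → Bool) → ℝ) :
    ∑ v, bernoulliWeight r v * F v =
      (1 - r) * ∑ v, bernoulliWeight r v * F (Fin.cons false v) +
        r * ∑ v, bernoulliWeight r v * F (Fin.cons true v) := by
  rw [← (Fin.consEquiv fun _ => Bool).sum_comp, Fintype.sum_prod_type, Fintype.sum_bool,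
    add_comm, Finset.mul_sum, Finset.mul_sum]
  simp [Fin.consEquiv, bernoulliWeight, Fin.prod_univ_succ, mul_assoc]

theorem sum_bernoulliWeight_mul_mono {F : (Fin n → Bool) → ℝ} (hF : Monotone F)
    (hp : 0 ≤ p) (hpq : p ≤ q) (hq : q ≤ 1) :
    ∑ v, bernoulliWeight p v * F v ≤ ∑ v, bernoulliWeight q v * F v := by
  induction n with
  | zero => simp [bernoulliWeight]
  | succ n ih =>
    set A : ℝ → ℝ := fun r => ∑ v, bernoulliWeight r v * F (Fin.cons false v)
    set B : ℝ → ℝ := fun r => ∑ v, bernoulliWeight r v * F (Fin.cons true v)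
    have hcons (b : Bool) : Monotone fun v : Fin n → Bool => F (Fin.cons b v) :=
      fun _ _ h => hF (Fin.cons_le_cons.mpr ⟨le_rfl, h⟩)
    have hA : A p ≤ A q := ih (hcons false)
    have hB : B p ≤ B q := ih (hcons true)
    have hAB : A q ≤ B q := Finset.sum_le_sum fun v _ =>
      mul_le_mul_of_nonneg_left (hF (Fin.cons_le_cons.mpr ⟨Bool.false_le _, le_rfl⟩))
        (bernoulliWeight_nonneg (hp.trans hpq) hq v)
    rw [sum_bernoulliWeight_mul_eq_cons, sum_bernoulliWeight_mul_eq_cons]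
    calc (1 - p) * A p + p * B p ≤ (1 - p) * A q + p * B q := by
          gcongr; linarith
      _ ≤ (1 - q) * A q + q * B q := by nlinarith

theorem sum_bernoulliWeight_mono_of_isUpperSet {s : Finset (Fin n → Bool)}
    (hs : IsUpperSet (s : Set (Fin n → Bool))) (hp : 0 ≤ p) (hpq : p ≤ q) (hq : q ≤ 1) :
    ∑ v ∈ s, bernoulliWeight p v ≤ ∑ v ∈ s, bernoulliWeight q v := by
  classical
  have hmono : Monotone fun v => if v ∈ s then (1 : ℝ) else 0 := fun v w hvw => by
    by_cases hv : v ∈ s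
    · have hw : w ∈ s := hs hvw hv
      simp [hv, hw]
    · simp only [hv, if_false]; split <;> norm_num
  simpa [mul_ite, Finset.sum_ite_mem] using sum_bernoulliWeight_mul_mono hmono hp hpq hq

end BernoulliCube

namespace IsBernoulliSeq

variable {P : Measure Ω} {r : ℝ} {X : ℕ → Ω → ℕ}

theorem measure_decide_eq (hB : IsBernoulliSeq P r X) (hr₀ : 0 ≤ r) (i : ℕ) (b : Bool) :
    P {ω | decide (X i ω = 1) = b} = ENNReal.ofReal (if b then r else 1 - r) := by
  have := hB.isProb
  cases b
  · have hcompl : {ω | decide (X i ω = 1) = false} = (X i ⁻¹' {1})ᶜ := by ext; simp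
    rw [hcompl, prob_compl_eq_one_sub (hB.meas i (measurableSet_singleton 1)), hB.bern i,
      if_neg Bool.false_ne_true, ENNReal.ofReal_sub 1 hr₀, ENNReal.ofReal_one]
  · rw [if_pos rfl, ← hB.bern i]
    congr 1
    ext
    simp

theorem measure_bits_eq (hB : IsBernoulliSeq P r X) (hr₀ : 0 ≤ r) (hr₁ : r ≤ 1) {n : ℕ}
    (v : Fin n → Bool) :
    P (bits X n ⁻¹' {v}) = ENNReal.ofReal (bernoulliWeight r v) := by
  have hfiber : bits X n ⁻¹' {v} = ⋂ i : Fin n, X i ⁻¹' {m | decide (m = 1) = v i} := by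
    ext; simp [bits, funext_iff]
  rw [hfiber, (hB.indep.precomp Fin.val_injective).meas_iInter
      fun i => ⟨{m | decide (m = 1) = v i}, .of_discrete, rfl⟩,
    bernoulliWeight, ENNReal.ofReal_prod_of_nonneg fun i _ => by split <;> linarith]
  exact Finset.prod_congr rfl fun i _ => hB.measure_decide_eq hr₀ i (v i)

theorem measurable_bits (hB : IsBernoulliSeq P r X) (n : ℕ) : Measurable (bits X n) :=
  measurable_pi_lambda _ fun i => (measurable_from_nat (f := fun m => decide (m = 1))).comp (hB.meas i)

theorem measure_hitUpperBy (hB : IsBernoulliSeq P r X) (hr₀ : 0 ≤ r) (hr₁ : r ≤ 1)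
    (U L : ℕ → ℤ) (n : ℕ) [DecidablePred fun v : Fin n → Bool => hitUpperBy (cubeWalk n) U L n v] :
    P {ω | hitUpperBy X U L n ω} =
      ENNReal.ofReal (∑ v with hitUpperBy (cubeWalk n) U L n v, bernoulliWeight r v) := by
  rw [ENNReal.ofReal_sum_of_nonneg fun v _ => bernoulliWeight_nonneg hr₀ hr₁ v]
  simp_rw [← hB.measure_bits_eq hr₀ hr₁]
  rw [sum_measure_preimage_singleton _ fun v _ => hB.measurable_bits n (measurableSet_singleton v)]
  congr 1
  ext ω
  simp [hitUpperBy_iff_cubeWalk_bits (hB.bdd · ω)]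

end IsBernoulliSeq

theorem statement_6_general {Ω : Type*} [MeasurableSpace Ω]
    (α : ℝ)
    (εs : ℕ → ℝ)
    (P : ℝ → Measure Ω) (X : ℕ → Ω → ℕ)
    (hBern : ∀ p ∈ Set.Icc (0:ℝ) 1, IsBernoulliSeq (P p) p X)
    (p q : ℝ) (hp : 0 ≤ p) (hpq : p ≤ q) (hq : q ≤ 1) :
    ∀ n : ℕ, 1 ≤ n →
      P p {ω | hitUpperBy X (Ub (P α) X εs) (Lb (P α) X εs) n ω} ≤
        P q {ω | hitUpperBy X (Ub (P α) X εs) (Lb (P α) X εs) n ω} := by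
  intro n _
  classical
  rw [(hBern p ⟨hp, hpq.trans hq⟩).measure_hitUpperBy hp (hpq.trans hq),
    (hBern q ⟨hp.trans hpq, hq⟩).measure_hitUpperBy (hp.trans hpq) hq]
  refine ENNReal.ofReal_le_ofReal (sum_bernoulliWeight_mono_of_isUpperSet ?_ hp hpq hq)
  simpa using isUpperSet_hitUpperBy_cubeWalk

theorem statement_6 {Ω : Type*} [MeasurableSpace Ω]
    (α ε : ℝ) (hα : α ∈ Set.Ioo (0:ℝ) 1) (hε : ε ∈ Set.Ioo (0:ℝ) 1)
    (εs : ℕ → ℝ) (hεs0 : εs 0 = 0) (hmono : Monotone εs)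
    (hnonneg : ∀ n, 0 ≤ εs n) (hlt : ∀ n, εs n < ε)
    (hlim : Filter.Tendsto εs Filter.atTop (nhds ε))
    (P : ℝ → Measure Ω) (X : ℕ → Ω → ℕ)
    (hBern : ∀ p ∈ Set.Icc (0:ℝ) 1, IsBernoulliSeq (P p) p X)
    (p q : ℝ) (hp : 0 ≤ p) (hpq : p ≤ q) (hq : q ≤ 1) :
    ∀ n : ℕ, 1 ≤ n →
      P p {ω | hitUpperBy X (Ub (P α) X εs) (Lb (P α) X εs) n ω} ≤
        P q {ω | hitUpperBy X (Ub (P α) X εs) (Lb (P α) X εs) n ω} :=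
  statement_6_general α εs P X hBern p q hp hpq hq

end SeqMC
end

section
/- For every n ∈ ℕ, both spending constraints hold: P_α(τ ≤ n, S_τ ≥ U_τ) ≤ ε_n and P_α(τ ≤ n, S_τ ≤ L_τ) ≤ ε_n. -/
open MeasureTheory ProbabilityTheory Filter Asymptotics
open scoped ENNReal

namespace SeqMC

variable {Ω : Type*} [MeasurableSpace Ω]

/-! By induction on `n`. Stopping through the upper (lower) boundary by time `n + 1` means doing
so by time `n`, or surviving to time `n` and crossing at time `n + 1`; the sum of these two
probabilities is what the choice of `U_{n+1}` (`L_{n+1}`) keeps below `ε_{n+1}`, provided the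
`sInf` (`sSup`) defining it is attained. It is: by the induction hypothesis and monotonicity of
`ε_n` the candidate `j = n + 2` (`j = -1`) qualifies, since `0 ≤ S_{n+1} ≤ n + 1` makes the
crossing event empty, and the candidate set is bounded below by `1` (is downward closed). -/

lemma S_le {β : Type*} {X : ℕ → β → ℕ} (hX : ∀ i ω, X i ω ≤ 1) (n : ℕ) (ω : β) : S X n ω ≤ n := by
  simpa [S] using Finset.sum_le_sum fun i (_ : i ∈ Finset.range n) => hX i ω

section Boundaries

variable {β : Type*} (X : ℕ → β → ℕ) {U L U' L' : ℕ → ℤ} {n : ℕ}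

lemma notStopped_congr (hU : ∀ k ≤ n, U k = U' k) (hL : ∀ k ≤ n, L k = L' k) :
    notStopped X U L n = notStopped X U' L' n := by
  ext ω
  refine forall_congr' fun k => imp_congr_right fun _ => imp_congr_right fun hk => ?_
  rw [hU k hk, hL k hk]

lemma hitUpperBy_congr_s7 (hU : ∀ k ≤ n, U k = U' k) (hL : ∀ k ≤ n, L k = L' k) :
    hitUpperBy X U L n = hitUpperBy X U' L' n := by
  ext ω
  refine exists_congr fun k => and_congr_right fun _ => and_congr_right fun hk => ?_
  rw [notStopped_congr X (fun j hj => hU j (by omega)) (fun j hj => hL j (by omega)), hU k hk]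

lemma hitLowerBy_congr (hU : ∀ k ≤ n, U k = U' k) (hL : ∀ k ≤ n, L k = L' k) :
    hitLowerBy X U L n = hitLowerBy X U' L' n := by
  ext ω
  refine exists_congr fun k => and_congr_right fun _ => and_congr_right fun hk => ?_
  rw [notStopped_congr X (fun j hj => hU j (by omega)) (fun j hj => hL j (by omega)), hL k hk]

lemma hitUpperBy_succ (ω : β) :
    hitUpperBy X U L (n + 1) ω ↔
      hitUpperBy X U L n ω ∨ notStopped X U L n ω ∧ U (n + 1) ≤ (S X (n + 1) ω : ℤ) := by
  constructor
  · rintro ⟨k, hk1, hkn, hstop, hS⟩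
    obtain hk | rfl := Nat.lt_succ_iff_lt_or_eq.1 (Nat.lt_succ_of_le hkn)
    · exact .inl ⟨k, hk1, Nat.lt_succ_iff.1 hk, hstop, hS⟩
    · exact .inr ⟨hstop, hS⟩
  · rintro (⟨k, hk1, hkn, hstop, hS⟩ | ⟨hstop, hS⟩)
    · exact ⟨k, hk1, hkn.trans n.le_succ, hstop, hS⟩
    · exact ⟨n + 1, n.succ_pos, le_rfl, hstop, hS⟩

lemma hitLowerBy_succ (ω : β) :
    hitLowerBy X U L (n + 1) ω ↔
      hitLowerBy X U L n ω ∨ notStopped X U L n ω ∧ (S X (n + 1) ω : ℤ) ≤ L (n + 1) := by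
  constructor
  · rintro ⟨k, hk1, hkn, hstop, hS⟩
    obtain hk | rfl := Nat.lt_succ_iff_lt_or_eq.1 (Nat.lt_succ_of_le hkn)
    · exact .inl ⟨k, hk1, Nat.lt_succ_iff.1 hk, hstop, hS⟩
    · exact .inr ⟨hstop, hS⟩
  · rintro (⟨k, hk1, hkn, hstop, hS⟩ | ⟨hstop, hS⟩)
    · exact ⟨k, hk1, hkn.trans n.le_succ, hstop, hS⟩
    · exact ⟨n + 1, n.succ_pos, le_rfl, hstop, hS⟩

end Boundaries

section Spending

variable {Pα : Measure Ω} {X : ℕ → Ω → ℕ} {εs : ℕ → ℝ} {n : ℕ}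

lemma bnd_add_two :
    bnd Pα X εs (n + 2) =
      (sInf {j : ℤ | 1 ≤ j ∧
          Pα {ω | notStopped X (Ub Pα X εs) (Lb Pα X εs) (n + 1) ω ∧ j ≤ (S X (n + 2) ω : ℤ)} +
            Pα {ω | hitUpperBy X (Ub Pα X εs) (Lb Pα X εs) (n + 1) ω} ≤
              ENNReal.ofReal (εs (n + 2))},
       sSup {j : ℤ |
          Pα {ω | notStopped X (Ub Pα X εs) (Lb Pα X εs) (n + 1) ω ∧ (S X (n + 2) ω : ℤ) ≤ j} +
            Pα {ω | hitLowerBy X (Ub Pα X εs) (Lb Pα X εs) (n + 1) ω} ≤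
              ENNReal.ofReal (εs (n + 2))}) := by
  have hU : ∀ k ≤ n + 1, (if _ : k < n + 2 then (bnd Pα X εs k).1 else 0) = Ub Pα X εs k :=
    fun k hk => dif_pos (by omega)
  have hL : ∀ k ≤ n + 1, (if _ : k < n + 2 then (bnd Pα X εs k).2 else 0) = Lb Pα X εs k :=
    fun k hk => dif_pos (by omega)
  rw [bnd, notStopped_congr X hU hL, hitUpperBy_congr_s7 X hU hL, hitLowerBy_congr X hU hL]

lemma not_hitUpperBy_one (hX : ∀ i ω, X i ω ≤ 1) (ω : Ω) :
    ¬ hitUpperBy X (Ub Pα X εs) (Lb Pα X εs) 1 ω := by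
  rintro ⟨k, hk1, hk, -, hS⟩
  obtain rfl : k = 1 := by omega
  have hU : Ub Pα X εs 1 = 2 := by rw [Ub, bnd]
  have hS1 : (S X 1 ω : ℤ) ≤ 1 := by exact_mod_cast S_le hX 1 ω
  omega

lemma not_hitLowerBy_one (ω : Ω) : ¬ hitLowerBy X (Ub Pα X εs) (Lb Pα X εs) 1 ω := by
  rintro ⟨k, hk1, hk, -, hS⟩
  obtain rfl : k = 1 := by omega
  have hL : Lb Pα X εs 1 = -1 := by rw [Lb, bnd]
  omega

lemma Ub_add_two_spending (hX : ∀ i ω, X i ω ≤ 1)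
    (h : Pα {ω | hitUpperBy X (Ub Pα X εs) (Lb Pα X εs) (n + 1) ω} ≤ ENNReal.ofReal (εs (n + 2))) :
    Pα {ω | notStopped X (Ub Pα X εs) (Lb Pα X εs) (n + 1) ω ∧
        Ub Pα X εs (n + 2) ≤ (S X (n + 2) ω : ℤ)} +
      Pα {ω | hitUpperBy X (Ub Pα X εs) (Lb Pα X εs) (n + 1) ω} ≤ ENNReal.ofReal (εs (n + 2)) := by
  have hfar : {ω | notStopped X (Ub Pα X εs) (Lb Pα X εs) (n + 1) ω ∧
      (n + 3 : ℤ) ≤ (S X (n + 2) ω : ℤ)} = ∅ :=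
    Set.eq_empty_of_forall_notMem fun ω ⟨_, hS⟩ => by
      have : (S X (n + 2) ω : ℤ) ≤ n + 2 := by exact_mod_cast S_le hX (n + 2) ω
      omega
  set T := {j : ℤ | 1 ≤ j ∧
      Pα {ω | notStopped X (Ub Pα X εs) (Lb Pα X εs) (n + 1) ω ∧ j ≤ (S X (n + 2) ω : ℤ)} +
        Pα {ω | hitUpperBy X (Ub Pα X εs) (Lb Pα X εs) (n + 1) ω} ≤
          ENNReal.ofReal (εs (n + 2))} with hT
  have hfar_mem : (n + 3 : ℤ) ∈ T := by
    rw [hT, Set.mem_ofPred_eq, hfar, measure_empty, zero_add]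
    exact ⟨by omega, h⟩
  have hmem : sInf T ∈ T := Int.csInf_mem ⟨_, hfar_mem⟩ ⟨1, fun _ hj => hj.1⟩
  rw [Ub, bnd_add_two]
  exact hmem.2

lemma Lb_add_two_spending
    (h : Pα {ω | hitLowerBy X (Ub Pα X εs) (Lb Pα X εs) (n + 1) ω} ≤ ENNReal.ofReal (εs (n + 2))) :
    Pα {ω | notStopped X (Ub Pα X εs) (Lb Pα X εs) (n + 1) ω ∧
        (S X (n + 2) ω : ℤ) ≤ Lb Pα X εs (n + 2)} +
      Pα {ω | hitLowerBy X (Ub Pα X εs) (Lb Pα X εs) (n + 1) ω} ≤ ENNReal.ofReal (εs (n + 2)) := by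
  set T := {j : ℤ |
      Pα {ω | notStopped X (Ub Pα X εs) (Lb Pα X εs) (n + 1) ω ∧ (S X (n + 2) ω : ℤ) ≤ j} +
        Pα {ω | hitLowerBy X (Ub Pα X εs) (Lb Pα X εs) (n + 1) ω} ≤
          ENNReal.ofReal (εs (n + 2))} with hT
  have hdown : ∀ i j, i ≤ j → j ∈ T → i ∈ T := by
    intro i j hij hj
    rw [hT, Set.mem_ofPred_eq] at hj ⊢
    refine le_trans (add_le_add (measure_mono ?_) le_rfl) hj
    exact fun ω ⟨hstop, hS⟩ => ⟨hstop, hS.trans hij⟩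
  have hneg : (-1 : ℤ) ∈ T := by
    have hempty : {ω | notStopped X (Ub Pα X εs) (Lb Pα X εs) (n + 1) ω ∧
        (S X (n + 2) ω : ℤ) ≤ -1} = ∅ :=
      Set.eq_empty_of_forall_notMem fun ω ⟨_, hS⟩ => by omega
    rwa [hT, Set.mem_ofPred_eq, hempty, measure_empty, zero_add]
  have hmem : sSup T ∈ T := by
    by_cases hbdd : BddAbove T
    · exact Int.csSup_mem ⟨-1, hneg⟩ hbdd
    -- `sSup` of a set unbounded above is the junk value `0`, but then `T` is all of `ℤ`.
    · obtain ⟨j, hj, hlt⟩ := not_bddAbove_iff.1 hbdd (sSup T)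
      exact hdown _ j hlt.le hj
  rw [Lb, bnd_add_two]
  exact hmem

lemma measure_hitUpperBy_le (hX : ∀ i ω, X i ω ≤ 1) (hmono : Monotone εs) (hn : 1 ≤ n) :
    Pα {ω | hitUpperBy X (Ub Pα X εs) (Lb Pα X εs) n ω} ≤ ENNReal.ofReal (εs n) := by
  induction n, hn using Nat.le_induction with
  | base => simp [not_hitUpperBy_one hX]
  | succ n hn ih =>
    obtain ⟨m, rfl⟩ : ∃ m, n = m + 1 := ⟨n - 1, by omega⟩
    calc Pα {ω | hitUpperBy X (Ub Pα X εs) (Lb Pα X εs) (m + 2) ω}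
        ≤ Pα ({ω | notStopped X (Ub Pα X εs) (Lb Pα X εs) (m + 1) ω ∧
              Ub Pα X εs (m + 2) ≤ (S X (m + 2) ω : ℤ)} ∪
            {ω | hitUpperBy X (Ub Pα X εs) (Lb Pα X εs) (m + 1) ω}) :=
          measure_mono fun ω hω => ((hitUpperBy_succ X ω).1 hω).symm
      _ ≤ _ := measure_union_le _ _
      _ ≤ ENNReal.ofReal (εs (m + 2)) :=
          Ub_add_two_spending hX (ih.trans (ENNReal.ofReal_le_ofReal (hmono m.succ.le_succ)))

lemma measure_hitLowerBy_le (hmono : Monotone εs) (hn : 1 ≤ n) :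
    Pα {ω | hitLowerBy X (Ub Pα X εs) (Lb Pα X εs) n ω} ≤ ENNReal.ofReal (εs n) := by
  induction n, hn using Nat.le_induction with
  | base => simp [not_hitLowerBy_one]
  | succ n hn ih =>
    obtain ⟨m, rfl⟩ : ∃ m, n = m + 1 := ⟨n - 1, by omega⟩
    calc Pα {ω | hitLowerBy X (Ub Pα X εs) (Lb Pα X εs) (m + 2) ω}
        ≤ Pα ({ω | notStopped X (Ub Pα X εs) (Lb Pα X εs) (m + 1) ω ∧
              (S X (m + 2) ω : ℤ) ≤ Lb Pα X εs (m + 2)} ∪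
            {ω | hitLowerBy X (Ub Pα X εs) (Lb Pα X εs) (m + 1) ω}) :=
          measure_mono fun ω hω => ((hitLowerBy_succ X ω).1 hω).symm
      _ ≤ _ := measure_union_le _ _
      _ ≤ ENNReal.ofReal (εs (m + 2)) :=
          Lb_add_two_spending (ih.trans (ENNReal.ofReal_le_ofReal (hmono m.succ.le_succ)))

end Spending

theorem statement_7_general {Ω : Type*} [MeasurableSpace Ω]
    (α : ℝ) (hα : α ∈ Set.Ioo (0:ℝ) 1)
    (εs : ℕ → ℝ) (hmono : Monotone εs)
    (P : ℝ → Measure Ω) (X : ℕ → Ω → ℕ)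
    (hBern : ∀ p ∈ Set.Icc (0:ℝ) 1, IsBernoulliSeq (P p) p X) :
    ∀ n : ℕ, 1 ≤ n →
      P α {ω | hitUpperBy X (Ub (P α) X εs) (Lb (P α) X εs) n ω} ≤ ENNReal.ofReal (εs n) ∧
        P α {ω | hitLowerBy X (Ub (P α) X εs) (Lb (P α) X εs) n ω} ≤ ENNReal.ofReal (εs n) := by
  have hX := (hBern α (Set.Ioo_subset_Icc_self hα)).bdd
  exact fun n hn => ⟨measure_hitUpperBy_le hX hmono hn, measure_hitLowerBy_le hmono hn⟩

theorem statement_7 {Ω : Type*} [MeasurableSpace Ω]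
    (α ε : ℝ) (hα : α ∈ Set.Ioo (0:ℝ) 1) (hε : ε ∈ Set.Ioo (0:ℝ) 1)
    (εs : ℕ → ℝ) (hεs0 : εs 0 = 0) (hmono : Monotone εs)
    (hnonneg : ∀ n, 0 ≤ εs n) (hlt : ∀ n, εs n < ε)
    (hlim : Filter.Tendsto εs Filter.atTop (nhds ε))
    (P : ℝ → Measure Ω) (X : ℕ → Ω → ℕ)
    (hBern : ∀ p ∈ Set.Icc (0:ℝ) 1, IsBernoulliSeq (P p) p X) :
    ∀ n : ℕ, 1 ≤ n →
      P α {ω | hitUpperBy X (Ub (P α) X εs) (Lb (P α) X εs) n ω} ≤ ENNReal.ofReal (εs n) ∧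
        P α {ω | hitLowerBy X (Ub (P α) X εs) (Lb (P α) X εs) n ω} ≤ ENNReal.ofReal (εs n) :=
  statement_7_general α hα εs hmono P X hBern

end SeqMC
end
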